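/- arXiv:math/9901113 — 3 statements merged into one kernel-verified Lean document; each statement's English description precedes it below -/
import Mathlib

section
/- Let F be a CM-field with complex conjugation x ↦ x̄, and let Σ_F be the set of embeddings F → ℂ. A CM-type is a subset Φ ⊆ Σ_F with Σ_F = Φ ⊔ Φ̄, where Φ̄ = {σ̄ : σ ∈ Φ} and σ̄(x) = conj(σ(x)). Then the map sending a CM-type Φ to the element J_Φ ∈ F ⊗_ℚ ℝ corresponding to (i,...,i) under the isomorphism F ⊗_ℚ ℝ ≅ ℂ^Φ determined by Φ is a bijection between the set of CM-types of F and the set Γ_F = {J ∈ F ⊗_ℚ ℝ : J² = -1}. -/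
open Complex TensorProduct

noncomputable section

variable (F : Type*) [Field F] [NumberField F]

/-- The complex conjugate `σ̄` of an embedding `σ : F → ℂ`, given by `σ̄(x) = conj (σ x)`. -/
def conjEmbedding (σ : F →ₐ[ℚ] ℂ) : F →ₐ[ℚ] ℂ :=
  ((Complex.conjAe.toAlgHom.restrictScalars ℚ).comp σ)

/-- A CM-type for `F` is a set `Φ` of embeddings `F → ℂ` such that the set of all
embeddings is the disjoint union of `Φ` and `Φ̄`. -/
def IsCMType (Φ : Set (F →ₐ[ℚ] ℂ)) : Prop :=
  ∀ σ : F →ₐ[ℚ] ℂ, σ ∈ Φ ↔ conjEmbedding F σ ∉ Φ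

/-- The canonical extension of an embedding `σ : F → ℂ` to a `ℚ`-algebra homomorphism
`F ⊗_ℚ ℝ → ℂ`. -/
def extEmbedding (σ : F →ₐ[ℚ] ℂ) : F ⊗[ℚ] ℝ →ₐ[ℚ] ℂ :=
  Algebra.TensorProduct.productMap σ (Complex.ofRealAm.restrictScalars ℚ)

namespace CMAux

@[simp] lemma conjEmbedding_apply (σ : F →ₐ[ℚ] ℂ) (x : F) :
    conjEmbedding F σ x = (starRingEnd ℂ) (σ x) := rfl

@[simp] lemma conjEmbedding_conjEmbedding (σ : F →ₐ[ℚ] ℂ) :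
    conjEmbedding F (conjEmbedding F σ) = σ := by
  ext x; simp

/-- The extension of `σ` to `ℝ ⊗[ℚ] F` as an `ℝ`-algebra homomorphism. -/
def psi (σ : F →ₐ[ℚ] ℂ) : ℝ ⊗[ℚ] F →ₐ[ℝ] ℂ :=
  Algebra.TensorProduct.productLeftAlgHom (Algebra.ofId ℝ ℂ) σ

@[simp] lemma psi_tmul (σ : F →ₐ[ℚ] ℂ) (r : ℝ) (a : F) :
    psi F σ (r ⊗ₜ a) = (r : ℂ) * σ a := by
  simp [psi, Algebra.TensorProduct.lift_tmul, Algebra.ofId_apply, Algebra.algebraMap_eq_smul_one]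

lemma extEmbedding_eq_psi (σ : F →ₐ[ℚ] ℂ) (x : F ⊗[ℚ] ℝ) :
    extEmbedding F σ x = psi F σ (Algebra.TensorProduct.comm ℚ F ℝ x) := by
  induction x using TensorProduct.induction_on with
  | zero => simp
  | tmul a r =>
      simp [extEmbedding, Algebra.TensorProduct.comm_tmul]
      ring
  | add x y hx hy => simp [map_add, hx, hy]

lemma psi_conjEmbedding (σ : F →ₐ[ℚ] ℂ) (x : ℝ ⊗[ℚ] F) :
    psi F (conjEmbedding F σ) x = (starRingEnd ℂ) (psi F σ x) := by
  induction x using TensorProduct.induction_on with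
  | zero => simp
  | tmul r a => simp
  | add x y hx hy => simp [map_add, hx, hy]

/-- The joint embedding `ℝ ⊗[ℚ] F → ℂ^Σ` as an `ℝ`-linear map. -/
def Psi : (ℝ ⊗[ℚ] F) →ₗ[ℝ] ((F →ₐ[ℚ] ℂ) → ℂ) where
  toFun x := fun σ => psi F σ x
  map_add' x y := by funext σ; simp
  map_smul' r x := by funext σ; simp

@[simp] lemma Psi_apply (x : ℝ ⊗[ℚ] F) (σ : F →ₐ[ℚ] ℂ) : Psi F x σ = psi F σ x := rfl

lemma Psi_injective : Function.Injective (Psi F) := by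
  classical
  rw [← LinearMap.ker_eq_bot, LinearMap.ker_eq_bot']
  intro x hx
  set b := Module.finBasis ℚ F with hb
  set B := Algebra.TensorProduct.basis ℝ b with hB
  have hcard : Fintype.card (F →ₐ[ℚ] ℂ) = Module.finrank ℚ F := AlgHom.card ℚ F ℂ
  let eqv : Fin (Module.finrank ℚ F) ≃ (F →ₐ[ℚ] ℂ) :=
    (Fintype.equivFinOfCardEq hcard).symm
  set M : Matrix (F →ₐ[ℚ] ℂ) (F →ₐ[ℚ] ℂ) ℂ := fun σ τ => σ (b (eqv.symm τ)) with hM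
  have hrows : LinearIndependent ℂ (fun σ : (F →ₐ[ℚ] ℂ) => M σ) := by
    let L : (F →ₗ[ℚ] ℂ) →ₗ[ℂ] ((F →ₐ[ℚ] ℂ) → ℂ) :=
      { toFun := fun f τ => f (b (eqv.symm τ)),
        map_add' := by intros; rfl
        map_smul' := by intros; rfl }
    have hker : LinearMap.ker L = ⊥ := by
      rw [LinearMap.ker_eq_bot']
      intro f hf
      refine b.ext fun j => ?_
      have := congrFun hf (eqv j)
      simpa [L] using this
    exact (linearIndependent_toLinearMap ℚ F ℂ).map' L hker
  have hunit : IsUnit M := Matrix.linearIndependent_rows_iff_isUnit.mp hrows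
  have hinj : Function.Injective M.mulVec := Matrix.mulVec_injective_iff_isUnit.mpr hunit
  set vv : (F →ₐ[ℚ] ℂ) → ℂ := fun τ => ((B.repr x) (eqv.symm τ) : ℂ) with hvv
  have hrepr : ∀ σ : F →ₐ[ℚ] ℂ,
      psi F σ x = ∑ j, ((B.repr x) j : ℂ) * σ (b j) := by
    intro σ
    conv_lhs => rw [← B.sum_repr x]
    rw [map_sum]
    refine Finset.sum_congr rfl fun j _ => ?_
    rw [map_smul, hB, Algebra.TensorProduct.basis_apply]
    simp [Complex.real_smul, mul_comm]
  have hmv : M.mulVec vv = 0 := by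
    funext σ
    have hx' : psi F σ x = 0 := congrFun hx σ
    rw [hrepr σ] at hx'
    have : M.mulVec vv σ = ∑ τ, σ (b (eqv.symm τ)) * ((B.repr x) (eqv.symm τ) : ℂ) := by
      simp [Matrix.mulVec, dotProduct, hM, hvv]
    rw [this, Pi.zero_apply]
    rw [Fintype.sum_equiv eqv (fun j => ((B.repr x) j : ℂ) * σ (b j))
      (fun τ => σ (b (eqv.symm τ)) * ((B.repr x) (eqv.symm τ) : ℂ)) (fun j => by
        simp [mul_comm])] at hx'
    exact hx'
  have hvv0 : vv = 0 := hinj (by rw [hmv, Matrix.mulVec_zero])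
  have hr0 : B.repr x = 0 := by
    ext j
    have := congrFun hvv0 (eqv j)
    simpa [hvv] using this
  simpa using congrArg B.repr.symm hr0

lemma psi_eq_iff {x y : ℝ ⊗[ℚ] F} (h : ∀ σ : F →ₐ[ℚ] ℂ, psi F σ x = psi F σ y) : x = y :=
  Psi_injective F (by funext σ; simpa using h σ)

/-- The conjugation-equivariant subspace of `ℂ^Σ`. -/
def E : Submodule ℝ ((F →ₐ[ℚ] ℂ) → ℂ) where
  carrier := {v | ∀ σ, v (conjEmbedding F σ) = (starRingEnd ℂ) (v σ)}
  add_mem' {v w} hv hw σ := by simp [hv σ, hw σ]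
  zero_mem' σ := by simp
  smul_mem' r v hv σ := by
    simp only [Pi.smul_apply, hv σ, starRingEnd_apply, star_smul, star_trivial (r := r)]

lemma range_le_E : LinearMap.range (Psi F) ≤ E F := by
  rintro _ ⟨x, rfl⟩ σ
  simp [psi_conjEmbedding]

lemma finrank_E (Φ : Set (F →ₐ[ℚ] ℂ)) (hΦ : IsCMType F Φ) :
    Module.finrank ℝ (E F) = Module.finrank ℚ F := by
  classical
  haveI : Fintype ↥Φ := Fintype.ofFinite _
  have hc : ∀ σ, σ ∉ Φ → conjEmbedding F σ ∈ Φ := fun σ h => by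
    by_contra h'; exact h ((hΦ σ).mpr h')
  have hc2 : ∀ σ, σ ∈ Φ → conjEmbedding F σ ∉ Φ := fun σ h => (hΦ σ).mp h
  have hrestr : ∀ (v : E F) (σ : F →ₐ[ℚ] ℂ),
      (starRingEnd ℂ) (v.1 (conjEmbedding F σ)) = v.1 σ := by
    intro v σ
    rw [v.2 σ]
    simp
  let e : E F ≃ₗ[ℝ] (↥Φ → ℂ) :=
    { toFun := fun v σ => v.1 σ.1
      map_add' := fun v w => rfl
      map_smul' := fun r v => rfl
      invFun := fun w =>
        ⟨fun σ => if h : σ ∈ Φ then w ⟨σ, h⟩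
          else (starRingEnd ℂ) (w ⟨conjEmbedding F σ, hc σ h⟩), by
          intro σ
          by_cases h : σ ∈ Φ
          · have h2 := hc2 σ h
            simp only [h, h2, dif_pos, dif_neg, not_false_iff]
            refine congrArg _ (congrArg w (Subtype.ext ?_))
            exact conjEmbedding_conjEmbedding F σ
          · have h2 := hc σ h
            simp only [h, h2, dif_pos, dif_neg, not_false_iff]
            rw [Complex.conj_conj]⟩
      left_inv := fun v => by
        apply Subtype.ext
        funext σ
        by_cases h : σ ∈ Φ
        · simp only [h, dif_pos]
        · simp only [h, dif_neg, not_false_iff]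
          exact hrestr v σ
      right_inv := fun w => by
        funext σ
        simp only [σ.2, dif_pos] }
  rw [e.finrank_eq]
  have hcardsum : Fintype.card (F →ₐ[ℚ] ℂ) = Fintype.card ↥Φ + Fintype.card ↥Φ := by
    have e2 : (F →ₐ[ℚ] ℂ) ≃ (↥Φ ⊕ ↥Φ) :=
      { toFun := fun σ => if h : σ ∈ Φ then Sum.inl ⟨σ, h⟩
          else Sum.inr ⟨conjEmbedding F σ, hc σ h⟩
        invFun := Sum.elim (fun σ => σ.1) (fun σ => conjEmbedding F σ.1)
        left_inv := fun σ => by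
          by_cases h : σ ∈ Φ
          · simp only [h, dif_pos, Sum.elim_inl]
          · simp only [h, dif_neg, not_false_iff, Sum.elim_inr]
            exact conjEmbedding_conjEmbedding F σ
        right_inv := fun s => by
          rcases s with σ | σ
          · exact dif_pos σ.2
          · have h2 := hc2 σ.1 σ.2
            refine (dif_neg h2).trans ?_
            refine congrArg _ (Subtype.ext ?_)
            exact conjEmbedding_conjEmbedding F σ.1 }
    rw [Fintype.card_congr e2, Fintype.card_sum]
  have hfr : Module.finrank ℝ (↥Φ → ℂ) = Fintype.card ↥Φ * 2 := by
    rw [Module.finrank_pi_fintype, Complex.finrank_real_complex, Finset.sum_const,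
      Finset.card_univ, smul_eq_mul]
  rw [hfr, ← AlgHom.card ℚ F ℂ, hcardsum]
  omega

lemma range_eq_E (Φ : Set (F →ₐ[ℚ] ℂ)) (hΦ : IsCMType F Φ) :
    LinearMap.range (Psi F) = E F := by
  have h1 : Module.finrank ℝ (LinearMap.range (Psi F)) = Module.finrank ℚ F := by
    rw [LinearMap.finrank_range_of_inj (Psi_injective F)]
    rw [Module.finrank_eq_card_basis
      (Algebra.TensorProduct.basis ℝ (Module.finBasis ℚ F))]
    simp
  exact Submodule.eq_of_le_of_finrank_eq (range_le_E F)
    (by rw [h1, finrank_E F Φ hΦ])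

open scoped Classical in
lemma exists_J (Φ : Set (F →ₐ[ℚ] ℂ)) (hΦ : IsCMType F Φ) :
    ∃ J : F ⊗[ℚ] ℝ, ∀ σ : F →ₐ[ℚ] ℂ,
      extEmbedding F σ J = if σ ∈ Φ then Complex.I else -Complex.I := by
  classical
  set v : (F →ₐ[ℚ] ℂ) → ℂ := fun σ => if σ ∈ Φ then Complex.I else -Complex.I with hv
  have hvE : v ∈ E F := by
    intro σ
    by_cases h : σ ∈ Φ
    · have h' : conjEmbedding F σ ∉ Φ := (hΦ σ).mp h
      simp [hv, h, h']
    · have h' : conjEmbedding F σ ∈ Φ := by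
        by_contra h''
        exact h ((hΦ σ).mpr h'')
      simp [hv, h, h']
  rw [← range_eq_E F Φ hΦ] at hvE
  obtain ⟨x, hx⟩ := hvE
  refine ⟨(Algebra.TensorProduct.comm ℚ F ℝ).symm x, fun σ => ?_⟩
  rw [extEmbedding_eq_psi, AlgEquiv.apply_symm_apply]
  have := congrFun hx σ
  simpa [hv] using this

end CMAux

/-- Let `F` be a CM-field.  The map sending a CM-type `Φ` to the element
`J_Φ ∈ F ⊗_ℚ ℝ` corresponding to `(i,…,i)` under the isomorphism `F ⊗_ℚ ℝ ≅ ℂ^Φ`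
determined by `Φ` (i.e. the element mapped to `i` by the extension of every `σ ∈ Φ`)
is a bijection between the set of CM-types of `F` and `Γ_F = {J ∈ F ⊗_ℚ ℝ : J² = -1}`. -/
theorem cmTypes_equiv_complex_structures
    (F₀ : IntermediateField ℚ F)
    (htotallyReal : ∀ σ : F₀ →+* ℂ, ∀ x : F₀, (σ x).im = 0)
    (hquadratic : Module.finrank F₀ F = 2)
    (htotallyImaginary : ∀ σ : F →+* ℂ, ∃ x : F, (σ x).im ≠ 0) :
    ∃ e : {Φ : Set (F →ₐ[ℚ] ℂ) // IsCMType F Φ} ≃ {J : F ⊗[ℚ] ℝ // J * J = -1},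
      ∀ (Φ : {Φ : Set (F →ₐ[ℚ] ℂ) // IsCMType F Φ}) (σ : F →ₐ[ℚ] ℂ),
        σ ∈ Φ.1 → extEmbedding F σ (e Φ).1 = Complex.I := by
  classical
  have hIne : Complex.I ≠ -Complex.I := by
    intro h
    have := congrArg Complex.im h
    norm_num at this
  have hconj : ∀ (σ : F →ₐ[ℚ] ℂ) (J : F ⊗[ℚ] ℝ),
      extEmbedding F (conjEmbedding F σ) J = (starRingEnd ℂ) (extEmbedding F σ J) := by
    intro σ J
    rw [CMAux.extEmbedding_eq_psi, CMAux.extEmbedding_eq_psi, CMAux.psi_conjEmbedding]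
  have hext_inj : ∀ (x y : F ⊗[ℚ] ℝ),
      (∀ σ : F →ₐ[ℚ] ℂ, extEmbedding F σ x = extEmbedding F σ y) → x = y := by
    intro x y h
    have h2 : Algebra.TensorProduct.comm ℚ F ℝ x = Algebra.TensorProduct.comm ℚ F ℝ y :=
      CMAux.psi_eq_iff F fun σ => by
        rw [← CMAux.extEmbedding_eq_psi, ← CMAux.extEmbedding_eq_psi]; exact h σ
    exact (Algebra.TensorProduct.comm ℚ F ℝ).injective h2
  have hval : ∀ (J : F ⊗[ℚ] ℝ), J * J = -1 → ∀ σ : F →ₐ[ℚ] ℂ,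
      extEmbedding F σ J = Complex.I ∨ extEmbedding F σ J = -Complex.I := by
    intro J hJ σ
    set z := extEmbedding F σ J with hz
    have h1 : z * z = -1 := by rw [hz, ← map_mul, hJ, map_neg, map_one]
    have h2 : (z - Complex.I) * (z + Complex.I) = 0 := by
      have h3 : (z - Complex.I) * (z + Complex.I) = z * z - Complex.I * Complex.I := by ring
      rw [h3, Complex.I_mul_I, h1]; ring
    rcases mul_eq_zero.mp h2 with h | h
    · left; linear_combination h
    · right; linear_combination h
  have bwd_mem : ∀ J : {J : F ⊗[ℚ] ℝ // J * J = -1},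
      IsCMType F {σ | extEmbedding F σ J.1 = Complex.I} := by
    intro J σ
    simp only [Set.mem_setOf_eq]
    constructor
    · intro h h'
      rw [hconj σ J.1, h] at h'
      rw [Complex.conj_I] at h'
      exact hIne h'.symm
    · intro h'
      rcases hval J.1 J.2 σ with h | h
      · exact h
      · exfalso
        apply h'
        rw [hconj σ J.1, h]
        simp
  let bwd : {J : F ⊗[ℚ] ℝ // J * J = -1} → {Φ : Set (F →ₐ[ℚ] ℂ) // IsCMType F Φ} :=
    fun J => ⟨_, bwd_mem J⟩
  let fwdJ : {Φ : Set (F →ₐ[ℚ] ℂ) // IsCMType F Φ} → F ⊗[ℚ] ℝ :=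
    fun Φ => (CMAux.exists_J F Φ.1 Φ.2).choose
  have fwd_spec : ∀ (Φ : {Φ : Set (F →ₐ[ℚ] ℂ) // IsCMType F Φ}) (σ : F →ₐ[ℚ] ℂ),
      extEmbedding F σ (fwdJ Φ) = if σ ∈ Φ.1 then Complex.I else -Complex.I :=
    fun Φ => (CMAux.exists_J F Φ.1 Φ.2).choose_spec
  have fwd_sq : ∀ Φ, (fwdJ Φ) * (fwdJ Φ) = -1 := by
    intro Φ
    apply hext_inj
    intro σ
    rw [map_mul, fwd_spec Φ σ, map_neg, map_one]
    split_ifs <;> simp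
  let fwd : {Φ : Set (F →ₐ[ℚ] ℂ) // IsCMType F Φ} → {J : F ⊗[ℚ] ℝ // J * J = -1} :=
    fun Φ => ⟨fwdJ Φ, fwd_sq Φ⟩
  have hleft : ∀ Φ, bwd (fwd Φ) = Φ := by
    intro Φ
    apply Subtype.ext
    ext σ
    simp only [bwd, fwd, Set.mem_setOf_eq]
    rw [fwd_spec Φ σ]
    by_cases h : σ ∈ Φ.1
    · simp [h]
    · simp only [h, if_neg, iff_false]
      simpa [h] using fun h' => hIne h'.symm
  have hright : ∀ J, fwd (bwd J) = J := by
    intro J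
    apply Subtype.ext
    apply hext_inj
    intro σ
    show extEmbedding F σ (fwdJ (bwd J)) = _
    rw [fwd_spec (bwd J) σ]
    simp only [bwd, Set.mem_setOf_eq]
    by_cases h : extEmbedding F σ J.1 = Complex.I
    · rw [if_pos h, h]
    · rw [if_neg h]
      rcases hval J.1 J.2 σ with h' | h'
      · exact absurd h' h
      · rw [h']
  refine ⟨⟨fwd, bwd, hleft, hright⟩, fun Φ σ hσ => ?_⟩
  show extEmbedding F σ (fwdJ Φ) = Complex.I
  rw [fwd_spec Φ σ, if_pos hσ]

end
end

section
/- Let F be a CM-field of degree 4 over ℚ that is Galois over ℚ and does not contain an imaginary quadratic subfield. Then Gal(F/ℚ) is cyclic of order 4, and its action on Γ_F = {J ∈ F ⊗_ℚ ℝ : J² = -1} is transitive. -/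
open TensorProduct Module

lemma aux_conj_exists (F : Type*) [Field F] [NumberField F] [IsGalois ℚ F]
    (ρ : F →ₐ[ℚ] ℂ) :
    ∃ τ : F ≃ₐ[ℚ] F, ∀ x, ρ (τ x) = (starRingEnd ℂ) (ρ x) := by
  letI : Algebra F ℂ := ρ.toRingHom.toAlgebra
  haveI : IsScalarTower ℚ F ℂ := IsScalarTower.of_algebraMap_eq fun x => (ρ.commutes x).symm
  let χ : ℂ ≃ₐ[ℚ] ℂ := Complex.conjAe.restrictScalars ℚ
  refine ⟨χ.restrictNormal F, fun x => ?_⟩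
  have h := AlgEquiv.restrictNormal_commutes χ F x
  rw [RingHom.algebraMap_toAlgebra ρ.toRingHom] at h
  exact h

set_option maxHeartbeats 1000000 in
lemma aux_ext_emb (F : Type*) [Field F] [NumberField F]
    (k : IntermediateField ℚ F) (ρ : k →+* ℂ) :
    ∃ ρh : F →ₐ[ℚ] ℂ, ∀ x : k, ρh x = ρ x := by
  letI : Algebra k ℂ := ρ.toAlgebra
  haveI : IsScalarTower ℚ k ℂ := IsScalarTower.of_algebraMap_eq fun x => by
    have : (algebraMap ℚ ℂ) = ρ.comp (algebraMap ℚ k) := Subsingleton.elim _ _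
    rw [this]; rfl
  haveI : Algebra.IsAlgebraic k F := Algebra.IsAlgebraic.of_finite k F
  haveI : Module.IsTorsionFree k ℂ := Module.isTorsionFree_iff_algebraMap_injective.mpr ρ.injective
  let ρk : F →ₐ[k] ℂ := IsAlgClosed.lift
  refine ⟨ρk.restrictScalars ℚ, fun x => ?_⟩
  have := ρk.commutes x
  simpa [RingHom.algebraMap_toAlgebra] using this

lemma aux_card_two {G : Type*} [Group G] (H : Subgroup G) (h : Nat.card H = 2)
    {a b : G} (ha : a ∈ H) (hb : b ∈ H) (ha1 : a ≠ 1) (hb1 : b ≠ 1) : a = b := by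
  by_contra hab
  haveI : Finite H := Nat.finite_of_card_ne_zero (by omega)
  haveI : Fintype H := Fintype.ofFinite H
  rw [Nat.card_eq_fintype_card] at h
  have : 2 < Fintype.card H := by
    rw [Fintype.two_lt_card_iff]
    exact ⟨⟨1, H.one_mem⟩, ⟨a, ha⟩, ⟨b, hb⟩, by simpa using Ne.symm ha1,
      by simpa using Ne.symm hb1, by simpa using hab⟩
  omega

lemma aux_sq (w : ℂ) (hw : w * w = -1) : w = Complex.I ∨ w = -Complex.I := by
  have h : (w - Complex.I) * (w + Complex.I) = 0 := by
    have h2 : Complex.I * Complex.I = -1 := Complex.I_mul_I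
    linear_combination hw - h2
  rcases mul_eq_zero.mp h with h | h
  · exact Or.inl (sub_eq_zero.mp h)
  · exact Or.inr (eq_neg_of_add_eq_zero_left h)

set_option maxHeartbeats 3000000 in
lemma aux_transitive (F : Type*) [Field F] [NumberField F] [IsGalois ℚ F]
    (htotallyImaginary : ∀ σ : F →+* ℂ, ∃ x : F, (σ x).im ≠ 0)
    (φ : F →ₐ[ℚ] ℂ) (σ τ₀ : F ≃ₐ[ℚ] F)
    (hτ₀ : ∀ x, φ (τ₀ x) = (starRingEnd ℂ) (φ x))
    (hττ : τ₀ = σ * σ) (hσord : orderOf σ = 4)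
    (hquartic : Module.finrank ℚ F = 4) :
    ∀ J J' : F ⊗[ℚ] ℝ, J * J = -1 → J' * J' = -1 →
      ∃ γ : F ≃ₐ[ℚ] F, Algebra.TensorProduct.map γ.toAlgHom (AlgHom.id ℚ ℝ) J = J' := by
  classical
  intro J J' hJ hJ'
  let Ψ : (F ≃ₐ[ℚ] F) → (ℝ ⊗[ℚ] F →ₐ[ℝ] ℂ) := fun γ =>
    Algebra.TensorProduct.lift (Algebra.ofId ℝ ℂ) (φ.comp γ.toAlgHom) (fun x y => Commute.all _ _)
  have Ψtmul : ∀ γ (r : ℝ) (x : F), Ψ γ (r ⊗ₜ[ℚ] x) = (r : ℂ) * φ (γ x) := fun γ r x => by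
    simp [Ψ, Algebra.TensorProduct.lift_tmul, Algebra.ofId_apply, Algebra.algebraMap_eq_smul_one]
  have E1 : ∀ (δ γ : F ≃ₐ[ℚ] F) (z : ℝ ⊗[ℚ] F),
      Ψ δ (Algebra.TensorProduct.map (AlgHom.id ℚ ℝ) γ.toAlgHom z) = Ψ (δ * γ) z := by
    intro δ γ z
    induction z using TensorProduct.induction_on with
    | zero => simp
    | tmul r x => simp [Ψtmul, Algebra.TensorProduct.map_tmul, AlgEquiv.mul_apply]
    | add a b ha hb => simp only [map_add, ha, hb]
  have E2 : ∀ (γ : F ≃ₐ[ℚ] F) (z : ℝ ⊗[ℚ] F),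
      Ψ (τ₀ * γ) z = (starRingEnd ℂ) (Ψ γ z) := by
    intro γ z
    induction z using TensorProduct.induction_on with
    | zero => simp
    | tmul r x =>
        rw [Ψtmul, Ψtmul, AlgEquiv.mul_apply, hτ₀ (γ x), map_mul, Complex.conj_ofReal]
    | add a b ha hb => simp only [map_add, ha, hb]
  have S : ∀ γ, Function.Surjective (Ψ γ) := by
    intro γ w
    obtain ⟨x₀, hx₀⟩ := htotallyImaginary ((φ.comp γ.toAlgHom : F →ₐ[ℚ] ℂ) : F →+* ℂ)
    have hzim : (φ (γ x₀)).im ≠ 0 := hx₀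
    refine ⟨((w.re - w.im * (φ (γ x₀)).re / (φ (γ x₀)).im) : ℝ) ⊗ₜ[ℚ] (1:F)
      + ((w.im / (φ (γ x₀)).im) : ℝ) ⊗ₜ[ℚ] x₀, ?_⟩
    rw [map_add, Ψtmul, Ψtmul]
    simp only [map_one, mul_one]
    apply Complex.ext
    · simp only [Complex.add_re, Complex.ofReal_re, Complex.mul_re, Complex.ofReal_im]
      field_simp
      ring
    · simp only [Complex.add_im, Complex.ofReal_im, Complex.mul_im, Complex.ofReal_re]
      field_simp
      ring
  haveI : FiniteDimensional ℝ (ℝ ⊗[ℚ] F) := inferInstance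
  have hfinA : finrank ℝ (ℝ ⊗[ℚ] F) = 4 := by rw [Module.finrank_baseChange, hquartic]
  have hker : ∀ γ : F ≃ₐ[ℚ] F, finrank ℝ (LinearMap.ker (Ψ γ).toLinearMap) = 2 := by
    intro γ
    have h := LinearMap.finrank_range_add_finrank_ker (Ψ γ).toLinearMap
    have hrg : LinearMap.range (Ψ γ).toLinearMap = ⊤ := LinearMap.range_eq_top.mpr (S γ)
    rw [hrg, finrank_top, Complex.finrank_real_complex, hfinA] at h
    omega
  -- distinct kernels
  have hkerne : RingHom.ker ((Ψ 1 : ℝ ⊗[ℚ] F →ₐ[ℝ] ℂ) : ℝ ⊗[ℚ] F →+* ℂ)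
      ≠ RingHom.ker ((Ψ σ : ℝ ⊗[ℚ] F →ₐ[ℝ] ℂ) : ℝ ⊗[ℚ] F →+* ℂ) := by
    intro h
    let e1 := RingHom.quotientKerEquivOfSurjective (f := ((Ψ 1 : ℝ ⊗[ℚ] F →ₐ[ℝ] ℂ) : ℝ ⊗[ℚ] F →+* ℂ)) (S 1)
    let e2 := RingHom.quotientKerEquivOfSurjective (f := ((Ψ σ : ℝ ⊗[ℚ] F →ₐ[ℝ] ℂ) : ℝ ⊗[ℚ] F →+* ℂ)) (S σ)
    set χ : ℂ →+* ℂ := (e2.toRingHom.comp (Ideal.quotEquivOfEq h).toRingHom).comp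
      (e1.symm : ℂ ≃+* _).toRingHom with hχdef
    have hE : ∀ a : ℝ ⊗[ℚ] F, χ (Ψ 1 a) = Ψ σ a := by
      intro a
      have h1 : e1 (Ideal.Quotient.mk _ a) = Ψ 1 a := rfl
      have h1' : (e1.symm : ℂ ≃+* _) (Ψ 1 a) = Ideal.Quotient.mk _ a := by
        rw [← h1, RingEquiv.symm_apply_apply]
      have h2 : e2 (Ideal.Quotient.mk _ a) = Ψ σ a := rfl
      simp only [hχdef, RingHom.comp_apply, RingEquiv.toRingHom_eq_coe, RingHom.coe_coe, h1',
        Ideal.quotEquivOfEq_mk, h2]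
    have hfixR : ∀ r : ℝ, χ r = r := by
      intro r
      have ha : Ψ 1 (algebraMap ℝ (ℝ ⊗[ℚ] F) r) = (r : ℂ) := by rw [AlgHom.commutes]; rfl
      have hb : Ψ σ (algebraMap ℝ (ℝ ⊗[ℚ] F) r) = (r : ℂ) := by rw [AlgHom.commutes]; rfl
      calc χ r = χ (Ψ 1 (algebraMap ℝ (ℝ ⊗[ℚ] F) r)) := by rw [ha]
        _ = Ψ σ (algebraMap ℝ (ℝ ⊗[ℚ] F) r) := hE _
        _ = r := hb
    have hI2 : χ Complex.I * χ Complex.I = -1 := by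
      rw [← map_mul, Complex.I_mul_I, map_neg, map_one]
    have hiball : ∀ w : ℂ, χ w = w.re + w.im * χ Complex.I := by
      intro w
      conv_lhs => rw [← Complex.re_add_im w]
      rw [map_add, map_mul, hfixR, hfixR]
    rcases aux_sq _ hI2 with hi | hi
    · -- χ = id, so Ψ σ = Ψ 1, so σ = 1
      have hid : ∀ x : F, φ (σ x) = φ x := by
        intro x
        have := hE ((1:ℝ) ⊗ₜ[ℚ] x)
        rw [Ψtmul, Ψtmul, AlgEquiv.one_apply] at this
        simp only [Complex.ofReal_one, one_mul] at this
        rw [← this, hiball, hi]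
        simp [Complex.re_add_im]
      have hσ1 : σ = 1 := by
        ext x
        exact φ.toRingHom.injective (hid x)
      rw [hσ1] at hσord
      simp at hσord
    · -- χ = conj, so Ψ σ = Ψ τ₀, so σ = τ₀ = σ * σ
      have hid : ∀ x : F, φ (σ x) = φ (τ₀ x) := by
        intro x
        have := hE ((1:ℝ) ⊗ₜ[ℚ] x)
        rw [Ψtmul, Ψtmul, AlgEquiv.one_apply] at this
        simp only [Complex.ofReal_one, one_mul] at this
        rw [← this, hiball, hi, hτ₀]
        simp [Complex.ext_iff]
      have hστ : σ = τ₀ := by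
        ext x
        exact φ.toRingHom.injective (hid x)
      rw [hττ] at hστ
      have : σ = 1 := (mul_left_cancel (a := σ) (b := (1 : F ≃ₐ[ℚ] F)) (by rw [mul_one]; exact hστ)).symm
      rw [this] at hσord
      simp at hσord
  -- injectivity of the pair map
  have hinj : Function.Injective
      (LinearMap.prod (Ψ 1).toLinearMap (Ψ σ).toLinearMap) := by
    rw [← LinearMap.ker_eq_bot, LinearMap.ker_prod]
    have hmax1 : (RingHom.ker ((Ψ 1 : ℝ ⊗[ℚ] F →ₐ[ℝ] ℂ) : ℝ ⊗[ℚ] F →+* ℂ)).IsMaximal :=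
      RingHom.ker_isMaximal_of_surjective _ (S 1)
    have hmaxσ : (RingHom.ker ((Ψ σ : ℝ ⊗[ℚ] F →ₐ[ℝ] ℂ) : ℝ ⊗[ℚ] F →+* ℂ)).IsMaximal :=
      RingHom.ker_isMaximal_of_surjective _ (S σ)
    have hsup : RingHom.ker ((Ψ 1 : ℝ ⊗[ℚ] F →ₐ[ℝ] ℂ) : ℝ ⊗[ℚ] F →+* ℂ)
        ⊔ RingHom.ker ((Ψ σ : ℝ ⊗[ℚ] F →ₐ[ℝ] ℂ) : ℝ ⊗[ℚ] F →+* ℂ) = ⊤ :=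
      hmax1.coprime_of_ne hmaxσ hkerne
    obtain ⟨u, hu, v, hv, huv⟩ := Submodule.mem_sup.mp
      (hsup ▸ Submodule.mem_top (R := ℝ ⊗[ℚ] F) (x := (1 : ℝ ⊗[ℚ] F)))
    have hsupR : (LinearMap.ker (Ψ 1).toLinearMap) ⊔ (LinearMap.ker (Ψ σ).toLinearMap)
        = (⊤ : Submodule ℝ (ℝ ⊗[ℚ] F)) := by
      rw [eq_top_iff]
      intro a _
      rw [Submodule.mem_sup]
      refine ⟨a * u, ?_, a * v, ?_, by rw [← mul_add, huv, mul_one]⟩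
      · rw [LinearMap.mem_ker]
        show Ψ 1 (a * u) = 0
        have hu0 : Ψ 1 u = 0 := hu
        rw [map_mul, hu0, mul_zero]
      · rw [LinearMap.mem_ker]
        show Ψ σ (a * v) = 0
        have hv0 : Ψ σ v = 0 := hv
        rw [map_mul, hv0, mul_zero]
    have hdim := Submodule.finrank_sup_add_finrank_inf_eq
      (LinearMap.ker (Ψ 1).toLinearMap) (LinearMap.ker (Ψ σ).toLinearMap)
    rw [hsupR, finrank_top, hfinA, hker 1, hker σ] at hdim
    exact Submodule.finrank_eq_zero.mp (by omega)
  -- transfer the problem through comm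
  set c := (Algebra.TensorProduct.comm ℚ F ℝ : F ⊗[ℚ] ℝ ≃ₐ[ℚ] ℝ ⊗[ℚ] F) with hc
  have hcomm : ∀ (γ : F ≃ₐ[ℚ] F) (K : F ⊗[ℚ] ℝ),
      c (Algebra.TensorProduct.map γ.toAlgHom (AlgHom.id ℚ ℝ) K)
      = Algebra.TensorProduct.map (AlgHom.id ℚ ℝ) γ.toAlgHom (c K) := by
    intro γ K
    induction K using TensorProduct.induction_on with
    | zero => simp
    | tmul x r => simp [hc, Algebra.TensorProduct.map_tmul, Algebra.TensorProduct.comm_tmul]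
    | add a b ha hb => simp only [map_add, ha, hb]
  have hz : (c J) * (c J) = -1 := by rw [← map_mul, hJ, map_neg, map_one]
  have hz' : (c J') * (c J') = -1 := by rw [← map_mul, hJ', map_neg, map_one]
  suffices hsuf : ∃ γ : F ≃ₐ[ℚ] F,
      Algebra.TensorProduct.map (AlgHom.id ℚ ℝ) γ.toAlgHom (c J) = c J' by
    obtain ⟨γ, hγ⟩ := hsuf
    refine ⟨γ, c.injective ?_⟩
    rw [hcomm]
    exact hγ
  -- reduce to the two coordinates
  have key : ∀ γ : F ≃ₐ[ℚ] F, Ψ γ (c J) = Ψ 1 (c J') → Ψ (σ * γ) (c J) = Ψ σ (c J') →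
      Algebra.TensorProduct.map (AlgHom.id ℚ ℝ) γ.toAlgHom (c J) = c J' := by
    intro γ h1 h2
    apply hinj
    have g1 : Ψ 1 (Algebra.TensorProduct.map (AlgHom.id ℚ ℝ) γ.toAlgHom (c J)) = Ψ 1 (c J') := by
      rw [E1, one_mul]; exact h1
    have g2 : Ψ σ (Algebra.TensorProduct.map (AlgHom.id ℚ ℝ) γ.toAlgHom (c J)) = Ψ σ (c J') := by
      rw [E1]; exact h2
    simp only [LinearMap.prod_apply, Pi.prod]
    exact Prod.ext g1 g2
  -- the four basic facts
  have Hs2 : Ψ (σ * σ) (c J) = (starRingEnd ℂ) (Ψ 1 (c J)) := by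
    have := E2 1 (c J); rwa [mul_one, hττ] at this
  have Hs3 : Ψ (σ * (σ * σ)) (c J) = (starRingEnd ℂ) (Ψ σ (c J)) := by
    have := E2 σ (c J); rwa [hττ, mul_assoc] at this
  have Hs4 : Ψ (σ * (σ * (σ * σ))) (c J) = Ψ 1 (c J) := by
    have h4 : σ * (σ * (σ * σ)) = 1 := by
      have hp := pow_orderOf_eq_one σ
      rw [hσord] at hp
      have h4' : σ ^ 4 = σ * (σ * (σ * σ)) := by
        rw [pow_succ', pow_succ', pow_succ', pow_one]
      rw [← h4', hp]
    rw [h4]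
  have hp := aux_sq (Ψ 1 (c J)) (by rw [← map_mul, hz, map_neg, map_one])
  have hq := aux_sq (Ψ σ (c J)) (by rw [← map_mul, hz, map_neg, map_one])
  have hp' := aux_sq (Ψ 1 (c J')) (by rw [← map_mul, hz', map_neg, map_one])
  have hq' := aux_sq (Ψ σ (c J')) (by rw [← map_mul, hz', map_neg, map_one])
  rcases hp with hp | hp <;> rcases hq with hq | hq <;>
    rcases hp' with hp' | hp' <;> rcases hq' with hq' | hq' <;>
    first
    | (refine ⟨1, key 1 ?_ ?_⟩ <;>
        (simp only [mul_one, Hs2, Hs3, Hs4, hp, hq, hp', hq', Complex.conj_I, map_neg, neg_neg]; done))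
    | (refine ⟨σ, key σ ?_ ?_⟩ <;>
        (simp only [mul_one, Hs2, Hs3, Hs4, hp, hq, hp', hq', Complex.conj_I, map_neg, neg_neg]; done))
    | (refine ⟨σ * σ, key (σ * σ) ?_ ?_⟩ <;>
        (simp only [mul_one, Hs2, Hs3, Hs4, hp, hq, hp', hq', Complex.conj_I, map_neg, neg_neg]; done))
    | (refine ⟨σ * (σ * σ), key (σ * (σ * σ)) ?_ ?_⟩ <;>
        (simp only [mul_one, Hs2, Hs3, Hs4, hp, hq, hp', hq', Complex.conj_I, map_neg, neg_neg]; done))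

/-- Let `F` be a quartic CM-field that is Galois over `ℚ` and contains no imaginary
quadratic subfield.  Then `Gal(F/ℚ)` is cyclic of order `4`, and its natural action on
`Γ_F = {J ∈ F ⊗_ℚ ℝ : J² = -1}` is transitive. -/
theorem galois_quartic_cmField_cyclic_and_transitive_on_complex_structures
    (F : Type*) [Field F] [NumberField F] [IsGalois ℚ F]
    (hquartic : Module.finrank ℚ F = 4)
    (F₀ : IntermediateField ℚ F)
    (htotallyReal : ∀ σ : F₀ →+* ℂ, ∀ x : F₀, (σ x).im = 0)
    (hquadratic : Module.finrank F₀ F = 2)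
    (htotallyImaginary : ∀ σ : F →+* ℂ, ∃ x : F, (σ x).im ≠ 0)
    (hNoImagQuad : ¬ ∃ k : IntermediateField ℚ F, Module.finrank ℚ k = 2 ∧
      ∀ σ : k →+* ℂ, ∃ x : k, (σ x).im ≠ 0) :
    IsCyclic (F ≃ₐ[ℚ] F) ∧ Nat.card (F ≃ₐ[ℚ] F) = 4 ∧
    (∀ J J' : F ⊗[ℚ] ℝ, J * J = -1 → J' * J' = -1 →
      ∃ γ : F ≃ₐ[ℚ] F,
        Algebra.TensorProduct.map γ.toAlgHom (AlgHom.id ℚ ℝ) J = J') := by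
  classical
  have cardG : Fintype.card (F ≃ₐ[ℚ] F) = 4 := by
    rw [← Nat.card_eq_fintype_card, IsGalois.card_aut_eq_finrank, hquartic]
  haveI : Algebra.IsAlgebraic ℚ F := Algebra.IsAlgebraic.of_finite ℚ F
  let φ : F →ₐ[ℚ] ℂ := IsAlgClosed.lift
  obtain ⟨τ₀, hτ₀⟩ := aux_conj_exists F φ
  have cardN : Nat.card F₀.fixingSubgroup = 2 := by
    rw [IsGalois.card_fixingSubgroup_eq_finrank, hquadratic]
  have hmemN : ∀ (ρ : F →ₐ[ℚ] ℂ) (τ : F ≃ₐ[ℚ] F), (∀ x, ρ (τ x) = (starRingEnd ℂ) (ρ x)) →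
      τ ∈ F₀.fixingSubgroup ∧ τ ≠ 1 := by
    intro ρ τ hτ
    constructor
    · rw [IntermediateField.mem_fixingSubgroup_iff]
      intro x hx
      have him : (ρ x).im = 0 := by
        have := htotallyReal ((ρ.comp F₀.val : F₀ →ₐ[ℚ] ℂ) : F₀ →+* ℂ) ⟨x, hx⟩
        exact this
      have heq : ρ (τ x) = ρ x := by rw [hτ x, Complex.conj_eq_iff_im.mpr him]
      exact ρ.toRingHom.injective heq
    · intro h1
      obtain ⟨x, hx⟩ := htotallyImaginary (ρ : F →+* ℂ)
      have := hτ x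
      rw [h1] at this
      simp only [AlgEquiv.one_apply] at this
      exact hx (by
        have := congrArg Complex.im this
        simp [Complex.conj_im] at this
        simpa using (by linarith : (ρ x).im = 0))
  have hτ₀N := hmemN φ τ₀ hτ₀
  have huniq : ∀ (ρ : F →ₐ[ℚ] ℂ) (τ : F ≃ₐ[ℚ] F),
      (∀ x, ρ (τ x) = (starRingEnd ℂ) (ρ x)) → τ = τ₀ := fun ρ τ h =>
    aux_card_two _ cardN (hmemN ρ τ h).1 hτ₀N.1 (hmemN ρ τ h).2 hτ₀N.2
  have hcyc : IsCyclic (F ≃ₐ[ℚ] F) := by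
    by_contra hnc
    have hsq : ∀ g : F ≃ₐ[ℚ] F, g * g = 1 := by
      intro g
      by_contra hg
      have hdvd : orderOf g ∣ 4 := cardG ▸ orderOf_dvd_card
      have hne2 : orderOf g ≠ 2 := fun h => hg (by rw [← pow_two, ← h, pow_orderOf_eq_one])
      have hne1 : orderOf g ≠ 1 := fun h => hg (by
        have := orderOf_eq_one_iff.mp h
        rw [this]; simp)
      have hord : orderOf g = 4 := by
        have hdvd' : orderOf g ∣ 2 ^ 2 := by norm_num; exact hdvd
        rcases (Nat.dvd_prime_pow Nat.prime_two).mp hdvd' with ⟨i, hi, he⟩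
        interval_cases i
        · rw [pow_zero] at he; omega
        · rw [pow_one] at he; omega
        · rw [he]; norm_num
      exact hnc (isCyclic_of_orderOf_eq_card g (by rw [hord, Nat.card_eq_fintype_card, cardG]))
    have hex : ∃ g : F ≃ₐ[ℚ] F, g ≠ 1 ∧ g ≠ τ₀ := by
      by_contra hno
      push_neg at hno
      have hsub : (Finset.univ : Finset (F ≃ₐ[ℚ] F)) ⊆ {1, τ₀} := by
        intro g _
        by_cases h : g = 1
        · simp [h]
        · simp [hno g h]
      have h1 := Finset.card_le_card hsub
      have h2 : ({1, τ₀} : Finset (F ≃ₐ[ℚ] F)).card ≤ 2 :=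
        (Finset.card_insert_le _ _).trans (by simp)
      rw [Finset.card_univ, cardG] at h1
      omega
    obtain ⟨σ₀, hσ₀1, hσ₀τ⟩ := hex
    have horder : orderOf σ₀ = 2 :=
      orderOf_eq_prime (by rw [pow_two]; exact hsq σ₀) hσ₀1
    set k := IntermediateField.fixedField (Subgroup.zpowers σ₀) with hk
    have hcardz : Nat.card (Subgroup.zpowers σ₀) = 2 := by rw [Nat.card_zpowers, horder]
    have hfr : finrank k F = 2 := by
      rw [IntermediateField.finrank_fixedField_eq_card, hcardz]
    have hfrk : finrank ℚ k = 2 := by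
      have h3 := Module.finrank_mul_finrank ℚ k F
      rw [hfr, hquartic] at h3; omega
    refine hNoImagQuad ⟨k, hfrk, ?_⟩
    intro ρ
    by_contra hall
    push_neg at hall
    obtain ⟨ρh, hρh⟩ := aux_ext_emb F k ρ
    obtain ⟨τ, hτ⟩ := aux_conj_exists F ρh
    have hτeq : τ = τ₀ := huniq ρh τ hτ
    have hfix : τ₀ ∈ IntermediateField.fixingSubgroup k := by
      rw [IntermediateField.mem_fixingSubgroup_iff]
      intro x hx
      have h1 : ρh x = ρ ⟨x, hx⟩ := hρh ⟨x, hx⟩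
      have him : (ρh x).im = 0 := by rw [h1]; exact hall ⟨x, hx⟩
      have heq : ρh (τ₀ x) = ρh x := by
        rw [← hτeq, hτ x, Complex.conj_eq_iff_im.mpr him]
      exact ρh.toRingHom.injective heq
    rw [hk, IntermediateField.fixingSubgroup_fixedField] at hfix
    obtain ⟨n, hn'⟩ := hfix
    have hn : σ₀ ^ n = τ₀ := hn'
    have hz2 : σ₀ ^ (2 : ℤ) = 1 := by
      rw [show (2:ℤ) = ((2:ℕ):ℤ) by norm_num, zpow_natCast, pow_two]; exact hsq σ₀
    rcases Int.even_or_odd n with ⟨m, hm⟩ | ⟨m, hm⟩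
    · apply hτ₀N.2
      rw [← hn, hm, ← two_mul, zpow_mul, hz2, one_zpow]
    · apply hσ₀τ
      rw [← hn, hm, zpow_add, zpow_mul, hz2, one_zpow, one_mul, zpow_one]
  -- a generator of the cyclic Galois group
  haveI := hcyc
  obtain ⟨σgen, hgen⟩ := IsCyclic.exists_generator (α := F ≃ₐ[ℚ] F)
  have hσord : orderOf σgen = 4 := by
    rw [orderOf_eq_card_of_forall_mem_zpowers hgen, Nat.card_eq_fintype_card, cardG]
  have hτsq : τ₀ * τ₀ = 1 := by
    ext x
    apply φ.toRingHom.injective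
    show φ ((τ₀ * τ₀) x) = φ ((1 : F ≃ₐ[ℚ] F) x)
    rw [AlgEquiv.mul_apply, AlgEquiv.one_apply, hτ₀, hτ₀, Complex.conj_conj]
  have hττ : τ₀ = σgen * σgen := by
    obtain ⟨n, hn'⟩ := hgen τ₀
    have hn : σgen ^ n = τ₀ := hn'
    have h2n : σgen ^ (2 * n) = 1 := by
      rw [two_mul, zpow_add, hn]; exact hτsq
    have hdvd : ((4 : ℕ) : ℤ) ∣ 2 * n := by
      rw [← hσord]; exact orderOf_dvd_iff_zpow_eq_one.mpr h2n
    obtain ⟨t, ht⟩ := hdvd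
    have hnt : n = 2 * t := by omega
    have hz4 : σgen ^ (4 : ℤ) = 1 := by
      rw [show (4:ℤ) = ((4:ℕ):ℤ) by norm_num, zpow_natCast, ← hσord, pow_orderOf_eq_one]
    have hmul : σgen * σgen = σgen ^ (2 : ℤ) := by
      rw [show (2:ℤ) = ((2:ℕ):ℤ) by norm_num, zpow_natCast, pow_two]
    rcases Int.even_or_odd t with ⟨m, hm⟩ | ⟨m, hm⟩
    · exfalso
      apply hτ₀N.2
      rw [← hn, hnt, hm, show (2:ℤ) * (m + m) = 4 * m by ring, zpow_mul, hz4, one_zpow]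
    · rw [← hn, hnt, hm, show (2:ℤ) * (2 * m + 1) = 4 * m + 2 by ring, zpow_add, zpow_mul,
        hz4, one_zpow, one_mul, hmul]
  exact ⟨hcyc, by rw [Nat.card_eq_fintype_card, cardG],
    fun J J' hJ hJ' => aux_transitive F htotallyImaginary φ σgen τ₀ hτ₀ hττ hσord hquartic J J' hJ hJ'⟩
end

section
/- Let 𝔥 ⊆ 𝔤₁ ⊕ 𝔤₂ be a Lie subalgebra over a field of characteristic 0 with both projections 𝔥 → 𝔤₁ and 𝔥 → 𝔤₂ surjective, and suppose 𝔤₁, 𝔤₂ are semisimple. Then there exist ideals 𝔞₁ ⊴ 𝔤₁, 𝔞₂ ⊴ 𝔤₂, a Lie algebra 𝔤₃, isomorphisms 𝔤₁ ≅ 𝔞₁ ⊕ 𝔤₃ and 𝔤₂ ≅ 𝔞₂ ⊕ 𝔤₃, and an automorphism φ of 𝔤₃, such that under these identifications 𝔥 = 𝔞₁ ⊕ 𝔞₂ ⊕ Γ_φ, where Γ_φ = {(x, φ(x)) : x ∈ 𝔤₃} ⊆ 𝔤₃ ⊕ 𝔤₃. -/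
/-- The product of two Lie rings, with componentwise bracket. -/
instance prodLieRing (L₁ L₂ : Type*) [LieRing L₁] [LieRing L₂] : LieRing (L₁ × L₂) where
  bracket x y := (⁅x.1, y.1⁆, ⁅x.2, y.2⁆)
  add_lie x y z := Prod.ext (add_lie x.1 y.1 z.1) (add_lie x.2 y.2 z.2)
  lie_add x y z := Prod.ext (lie_add x.1 y.1 z.1) (lie_add x.2 y.2 z.2)
  lie_self x := Prod.ext (lie_self x.1) (lie_self x.2)
  leibniz_lie x y z := Prod.ext (leibniz_lie x.1 y.1 z.1) (leibniz_lie x.2 y.2 z.2)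

/-- The product of two Lie algebras. -/
instance prodLieAlgebra (K : Type*) [CommRing K] (L₁ L₂ : Type*) [LieRing L₁] [LieRing L₂]
    [LieAlgebra K L₁] [LieAlgebra K L₂] : LieAlgebra K (L₁ × L₂) where
  lie_smul t x y := Prod.ext (lie_smul t x.1 y.1) (lie_smul t x.2 y.2)

/-- Goursat's lemma for semisimple Lie algebras over a field of characteristic `0`:
if `𝔥 ⊆ 𝔤₁ ⊕ 𝔤₂` is a Lie subalgebra projecting surjectively onto both (finite
dimensional semisimple) factors, then there are ideals `𝔞₁ ⊕ 𝔟₁ = 𝔤₁`, `𝔞₂ ⊕ 𝔟₂ = 𝔤₂`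
and an isomorphism `φ : 𝔟₁ ≅ 𝔟₂` ("`𝔤₃` together with an automorphism") such that `𝔥`
is exactly `𝔞₁ ⊕ 𝔞₂ ⊕ Γ_φ`, where `Γ_φ` is the graph of `φ`. -/
theorem goursat_semisimple_lie
    (K : Type*) [Field K] [CharZero K]
    (L₁ L₂ : Type*) [LieRing L₁] [LieAlgebra K L₁] [LieRing L₂] [LieAlgebra K L₂]
    [FiniteDimensional K L₁] [FiniteDimensional K L₂]
    [LieAlgebra.IsSemisimple K L₁] [LieAlgebra.IsSemisimple K L₂]
    (H : LieSubalgebra K (L₁ × L₂))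
    (h₁ : Function.Surjective fun x : H => (x : L₁ × L₂).1)
    (h₂ : Function.Surjective fun x : H => (x : L₁ × L₂).2) :
    ∃ (a₁ b₁ : LieIdeal K L₁) (a₂ b₂ : LieIdeal K L₂) (φ : b₁ ≃ₗ⁅K⁆ b₂),
      a₁ ⊓ b₁ = ⊥ ∧ a₁ ⊔ b₁ = ⊤ ∧ a₂ ⊓ b₂ = ⊥ ∧ a₂ ⊔ b₂ = ⊤ ∧
      ∀ x : L₁ × L₂, x ∈ H ↔
        ∃ u ∈ a₁, ∃ v ∈ a₂, ∃ c : b₁,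
          x.1 = u + (c : L₁) ∧ x.2 = v + ((φ c : b₂) : L₂) := by
  classical
  -- subtraction in `H`
  have hsub : ∀ p q : L₁ × L₂, p ∈ H → q ∈ H → p - q ∈ H := fun p q hp hq =>
    H.toSubmodule.sub_mem hp hq
  have hadd : ∀ p q : L₁ × L₂, p ∈ H → q ∈ H → p + q ∈ H := fun p q hp hq =>
    H.toSubmodule.add_mem hp hq
  -- the two "kernel" ideals
  let a₁ : LieIdeal K L₁ :=
    { carrier := {x | (x, (0 : L₂)) ∈ H}
      add_mem' := fun {x} {y} hx hy => by
        have := hadd _ _ hx hy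
        simpa using this
      zero_mem' := H.zero_mem
      smul_mem' := fun t {x} hx => by
        have := H.toSubmodule.smul_mem t hx
        simpa [Prod.smul_def] using this
      lie_mem := fun {y} {x} hx => by
        obtain ⟨w, hw⟩ := h₁ y
        have h := H.lie_mem w.2 hx
        have hw' : (w : L₁ × L₂).1 = y := hw
        have he : ⁅(w : L₁ × L₂), (x, (0 : L₂))⁆ = (⁅y, x⁆, (0 : L₂)) := by
          show (⁅(w : L₁ × L₂).1, x⁆, ⁅(w : L₁ × L₂).2, (0 : L₂)⁆) = _
          rw [hw', lie_zero]
        rwa [he] at h }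
  let a₂ : LieIdeal K L₂ :=
    { carrier := {y | ((0 : L₁), y) ∈ H}
      add_mem' := fun {x} {y} hx hy => by
        have := hadd _ _ hx hy
        simpa using this
      zero_mem' := H.zero_mem
      smul_mem' := fun t {x} hx => by
        have := H.toSubmodule.smul_mem t hx
        simpa [Prod.smul_def] using this
      lie_mem := fun {y} {x} hx => by
        obtain ⟨w, hw⟩ := h₂ y
        have h := H.lie_mem w.2 hx
        have hw' : (w : L₁ × L₂).2 = y := hw
        have he : ⁅(w : L₁ × L₂), ((0 : L₁), x)⁆ = ((0 : L₁), ⁅y, x⁆) := by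
          show (⁅(w : L₁ × L₂).1, (0 : L₁)⁆, ⁅(w : L₁ × L₂).2, x⁆) = _
          rw [hw', lie_zero]
        rwa [he] at h }
  have memA₁ : ∀ x : L₁, x ∈ a₁ ↔ (x, (0 : L₂)) ∈ H := fun _ => Iff.rfl
  have memA₂ : ∀ y : L₂, y ∈ a₂ ↔ ((0 : L₁), y) ∈ H := fun _ => Iff.rfl
  -- complements
  obtain ⟨b₁, hb₁⟩ := exists_isCompl a₁
  obtain ⟨b₂, hb₂⟩ := exists_isCompl a₂
  have hc : IsCompl (b₂ : Submodule K L₂) (a₂ : Submodule K L₂) :=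
    ((LieSubmodule.isCompl_toSubmodule (N := a₂) (N' := b₂)).mpr hb₂).symm
  -- projection onto b₂ along a₂
  set π : L₂ →ₗ[K] b₂ := Submodule.linearProjOfIsCompl _ _ hc with hπ
  have πleft : ∀ d : b₂, π (d : L₂) = d := fun d =>
    Submodule.linearProjOfIsCompl_apply_left hc d
  have hker : ∀ y : L₂, y - (π y : L₂) ∈ a₂ := by
    intro y
    have h0 : π (y - (π y : L₂)) = 0 := by
      rw [map_sub, πleft (π y), sub_self]
    exact (Submodule.linearProjOfIsCompl_apply_eq_zero_iff hc).mp h0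
  have πkill : ∀ y : L₂, y ∈ a₂ → π y = 0 := fun y hy =>
    (Submodule.linearProjOfIsCompl_apply_eq_zero_iff hc).mpr hy
  -- the projection is a Lie algebra morphism
  have πlie : ∀ y y' : L₂, π ⁅y, y'⁆ = ⁅π y, π y'⁆ := by
    intro y y'
    have hdiff : ⁅y, y'⁆ - ⁅((π y : b₂) : L₂), ((π y' : b₂) : L₂)⁆ ∈ a₂ := by
      have h1 : ⁅y, y'⁆ - ⁅((π y : b₂) : L₂), ((π y' : b₂) : L₂)⁆
          = ⁅y - (π y : L₂), y'⁆ + ⁅((π y : b₂) : L₂), y' - (π y' : L₂)⁆ := by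
        rw [sub_lie, lie_sub]; abel
      rw [h1]
      refine a₂.add_mem' ?_ ?_
      · have : ⁅y - (π y : L₂), y'⁆ = -⁅y', y - (π y : L₂)⁆ := by
          rw [lie_skew]
        rw [this]
        exact a₂.toSubmodule.neg_mem (a₂.lie_mem (hker y))
      · exact a₂.lie_mem (hker y')
    have h2 : π ⁅y, y'⁆ = π ⁅((π y : b₂) : L₂), ((π y' : b₂) : L₂)⁆ := by
      have h := πkill _ hdiff
      rw [map_sub] at h
      exact sub_eq_zero.mp h
    have h3 : ⁅((π y : b₂) : L₂), ((π y' : b₂) : L₂)⁆ = ((⁅π y, π y'⁆ : b₂) : L₂) := rfl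
    rw [h2, h3, πleft]
  -- for every x there is y with (x, y) ∈ H
  have hex : ∀ x : L₁, ∃ y : L₂, (x, y) ∈ H := by
    intro x
    obtain ⟨w, hw⟩ := h₁ x
    exact ⟨(w : L₁ × L₂).2, by rw [← hw]; exact w.2⟩
  set f : L₁ → b₂ := fun x => π (hex x).choose with hf
  have wd : ∀ x : L₁, ∀ y : L₂, (x, y) ∈ H → f x = π y := by
    intro x y hxy
    have h0 : (x, (hex x).choose) ∈ H := (hex x).choose_spec
    have h1 : ((0 : L₁), y - (hex x).choose) ∈ H := by
      have := hsub _ _ hxy h0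
      simpa using this
    have h2 : π (y - (hex x).choose) = 0 := πkill _ ((memA₂ _).mpr h1)
    rw [map_sub] at h2
    exact (sub_eq_zero.mp h2).symm
  -- the Lie algebra morphism b₁ → b₂
  set e : b₁ →ₗ⁅K⁆ b₂ :=
    { toFun := fun c => f (c : L₁)
      map_add' := by
        intro c c'
        obtain ⟨y, hy⟩ := hex (c : L₁)
        obtain ⟨y', hy'⟩ := hex (c' : L₁)
        have h0 : ((c : L₁) + (c' : L₁), y + y') ∈ H := by
          have := hadd _ _ hy hy'
          simpa using this
        show f ((c : L₁) + (c' : L₁)) = f (c : L₁) + f (c' : L₁)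
        rw [wd _ _ h0, map_add, ← wd _ _ hy, ← wd _ _ hy']
      map_smul' := by
        intro t c
        obtain ⟨y, hy⟩ := hex (c : L₁)
        have h0 : (t • (c : L₁), t • y) ∈ H := by
          have := H.toSubmodule.smul_mem t hy
          simpa [Prod.smul_def] using this
        show f (t • (c : L₁)) = t • f (c : L₁)
        rw [wd _ _ h0, map_smul, ← wd _ _ hy]
      map_lie' := by
        intro c c'
        obtain ⟨y, hy⟩ := hex (c : L₁)
        obtain ⟨y', hy'⟩ := hex (c' : L₁)
        have h0 : (⁅(c : L₁), (c' : L₁)⁆, ⁅y, y'⁆) ∈ H := H.lie_mem hy hy'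
        show f ⁅(c : L₁), (c' : L₁)⁆ = ⁅f (c : L₁), f (c' : L₁)⁆
        rw [wd _ _ h0, πlie, ← wd _ _ hy, ← wd _ _ hy'] }
  have he : ∀ c : b₁, e c = f (c : L₁) := fun _ => rfl
  -- the graph of e is inside H
  have hgraph : ∀ c : b₁, ((c : L₁), ((e c : b₂) : L₂)) ∈ H := by
    intro c
    obtain ⟨y, hy⟩ := hex (c : L₁)
    have h4 : ((0 : L₁), y - (π y : L₂)) ∈ H := (memA₂ _).mp (hker y)
    have h5 := hsub _ _ hy h4
    have h6 : ((c : L₁), y) - ((0 : L₁), y - (π y : L₂)) = ((c : L₁), (π y : L₂)) := by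
      ext <;> simp
    rw [h6] at h5
    rwa [he, wd _ _ hy]
  -- injectivity
  have hinj : Function.Injective e := by
    intro c c' hcc
    have h0 : e (c - c') = 0 := by rw [map_sub, hcc, sub_self]
    obtain ⟨y, hy⟩ := hex ((c - c' : b₁) : L₁)
    have h1 : π y = 0 := by rw [← wd _ _ hy, ← he, h0]
    have h2 : y ∈ a₂ := by
      have := hker y
      rwa [h1, LieSubmodule.coe_zero, sub_zero] at this
    have h3 : (((c - c' : b₁) : L₁), (0 : L₂)) ∈ H := by
      have h5 := hsub _ _ hy ((memA₂ _).mp h2)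
      simpa using h5
    have h4 : ((c - c' : b₁) : L₁) ∈ a₁ ⊓ b₁ :=
      (LieSubmodule.mem_inf _ _ _).mpr ⟨(memA₁ _).mpr h3, (c - c').2⟩
    rw [hb₁.inf_eq_bot, LieSubmodule.mem_bot] at h4
    have : (c - c' : b₁) = 0 := Subtype.ext h4
    exact sub_eq_zero.mp this
  -- surjectivity
  have hsurj : Function.Surjective e := by
    intro d
    obtain ⟨w, hw⟩ := h₂ (d : L₂)
    have hxd : ((w : L₁ × L₂).1, (d : L₂)) ∈ H := by
      rw [← hw]; exact w.2
    have hx : (w : L₁ × L₂).1 ∈ a₁ ⊔ b₁ := by rw [hb₁.sup_eq_top]; trivial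
    obtain ⟨u, hu, z, hz, huz⟩ := (LieSubmodule.mem_sup _ _ _).mp hx
    have hu0 : (u, (0 : L₂)) ∈ H := (memA₁ _).mp hu
    have h5 := hsub _ _ hxd hu0
    have h6 : ((w : L₁ × L₂).1, (d : L₂)) - (u, (0 : L₂)) = (z, (d : L₂)) := by
      ext
      · show (w : L₁ × L₂).1 - u = z
        rw [← huz]; abel
      · show (d : L₂) - 0 = (d : L₂)
        rw [sub_zero]
    rw [h6] at h5
    refine ⟨⟨z, hz⟩, ?_⟩
    rw [he, wd _ _ h5, πleft]
  set φ : b₁ ≃ₗ⁅K⁆ b₂ := LieEquiv.ofBijective e ⟨hinj, hsurj⟩ with hφdef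
  have hφ : ∀ c : b₁, φ c = e c := fun _ => rfl
  refine ⟨a₁, b₁, a₂, b₂, φ, hb₁.inf_eq_bot, hb₁.sup_eq_top, hb₂.inf_eq_bot,
    hb₂.sup_eq_top, ?_⟩
  intro x
  constructor
  · intro hx
    have hx1 : x.1 ∈ a₁ ⊔ b₁ := by rw [hb₁.sup_eq_top]; trivial
    obtain ⟨u, hu, z, hz, huz⟩ := (LieSubmodule.mem_sup _ _ _).mp hx1
    have hu0 : (u, (0 : L₂)) ∈ H := (memA₁ _).mp hu
    have h5 := hsub _ _ hx hu0
    have h6 : x - (u, (0 : L₂)) = (z, x.2) := by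
      ext
      · show x.1 - u = z
        rw [← huz]; abel
      · show x.2 - 0 = x.2
        rw [sub_zero]
    rw [h6] at h5
    refine ⟨u, hu, x.2 - (π x.2 : L₂), hker x.2, ⟨z, hz⟩, by rw [← huz], ?_⟩
    rw [hφ, he, wd _ _ h5]
    abel
  · rintro ⟨u, hu, v, hv, c, hx1, hx2⟩
    have h1 : (u, (0 : L₂)) ∈ H := (memA₁ _).mp hu
    have h2 : ((0 : L₁), v) ∈ H := (memA₂ _).mp hv
    have h3 := hgraph c
    have h4 := hadd _ _ (hadd _ _ h1 h2) h3
    have h7 : (u, (0 : L₂)) + ((0 : L₁), v) + ((c : L₁), ((e c : b₂) : L₂)) = x := by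
      ext
      · show u + 0 + (c : L₁) = x.1
        rw [hx1]; abel
      · show 0 + v + ((e c : b₂) : L₂) = x.2
        rw [hx2, ← hφ]; abel
    rwa [h7] at h4
end
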